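/- arXiv:2205.05075 — 2 statements merged into one kernel-verified Lean document; each statement's English description precedes it below -/
import Mathlib

section
/- Let G be a connected weighted graph with distinct edge weights, all edge weights at most 1, and let H be a connected spanning subgraph of G containing MST(G). Suppose H contains a cycle. Then there exist non-adjacent (in MST(G)) vertices u, v joined by an edge in H such that, letting P be the path from u to v in MST(G) and S = V(P), the induced subgraph H[S] is exactly the cycle P together with edge uv, the edge uv is the heaviest edge of this cycle, and w(H[S]) ≤ 1 + wdiam(MST(G)). -/
open SimpleGraph

/-- `T` is a minimum spanning tree of `G` with respect to the edge weights `w`. -/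
noncomputable def wsum {V : Type*} [Finite V] (w : Sym2 V → ℝ) (T : SimpleGraph V) : ℝ :=
  ∑ e ∈ T.edgeSet.toFinite.toFinset, w e

def IsMST {V : Type*} [Finite V] (G : SimpleGraph V) (w : Sym2 V → ℝ)
    (T : SimpleGraph V) : Prop :=
  T ≤ G ∧ T.IsTree ∧ ∀ T' : SimpleGraph V, T' ≤ G → T'.IsTree → wsum w T ≤ wsum w T'

def DistinctWeights {V : Type*} (G : SimpleGraph V) (w : Sym2 V → ℝ) : Prop :=
  ∀ e ∈ G.edgeSet, ∀ f ∈ G.edgeSet, w e = w f → e = f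

/-- Weighted diameter of a graph: supremum of the weights of its paths. -/
noncomputable def wdiam {V : Type*} (w : Sym2 V → ℝ) (T : SimpleGraph V) : ℝ :=
  sSup {x : ℝ | ∃ (u v : V) (p : T.Walk u v), p.IsPath ∧ x = (p.edges.map w).sum}


/-! Take a non-tree edge `uv` of `H` whose tree path `P` is as short as possible. A chord `xy`
of `P` in `H` spans a subpath of `P`; if `xy` is a tree edge, that subpath is the edge itself by
uniqueness of tree paths, and otherwise minimality forces the subpath to be all of `P`, i.e.
`xy = uv`. The edge `uv` is the heaviest on the cycle by the cycle property of minimum spanning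
trees: exchanging any edge `f` of `P` for `uv` gives an acyclic graph with `|V| - 1` edges, hence
another spanning tree, of weight `w(M) - w f + w uv`. The bound on the cycle weight is then
`w uv ≤ 1` plus `w(P) ≤ wdiam M`. -/

open Walk

namespace SimpleGraph

variable {V : Type*} {G T : SimpleGraph V} {u v x y : V}

lemma Walk.exists_isSubwalk_of_mem_support (p : G.Walk u v) (hx : x ∈ p.support)
    (hy : y ∈ p.support) :
    ∃ (a b : V) (r : G.Walk a b), r.IsSubwalk p ∧ s(a, b) = s(x, y) := by
  classical
  rw [← p.take_spec hx, mem_support_append_iff] at hy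
  rcases hy with hy | hy
  · exact ⟨y, x, _, ((p.takeUntil x hx).isSubwalk_dropUntil hy).trans
      (p.isSubwalk_takeUntil hx), Sym2.eq_swap⟩
  · exact ⟨x, y, _, ((p.dropUntil x hx).isSubwalk_takeUntil hy).trans
      (p.isSubwalk_dropUntil hx), rfl⟩

lemma Walk.IsSubwalk.eq_of_length_eq {r : G.Walk x y} {p : G.Walk u v} (h : r.IsSubwalk p)
    (hlen : r.length = p.length) : x = u ∧ y = v := by
  obtain ⟨ru, rv, rfl⟩ := h
  simp only [length_append] at hlen
  exact ⟨(eq_of_length_eq_zero (by omega : ru.length = 0)).symm,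
    eq_of_length_eq_zero (by omega : rv.length = 0)⟩

lemma IsAcyclic.mk_mem_edges_of_isPath (hG : G.IsAcyclic) (h : G.Adj x y) {r : G.Walk x y}
    (hr : r.IsPath) : s(x, y) ∈ r.edges := by
  have hr_eq : r = h.toWalk :=
    congrArg Subtype.val ((hG.subsingleton_path x y).elim ⟨r, hr⟩ (Path.singleton h))
  simp [hr_eq]

lemma IsAcyclic.not_reachable_deleteEdges_of_mem_edges (hT : T.IsAcyclic) {p : T.Walk u v}
    (hp : p.IsPath) {f : Sym2 V} (hf : f ∈ p.edges) : ¬ (T.deleteEdges {f}).Reachable u v := by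
  classical
  induction f using Sym2.ind with | _ a b => ?_
  rw [reachable_deleteEdges_iff_exists_walk]
  rintro ⟨q, hq⟩
  have hqp : (q.toPath : T.Walk u v) = p :=
    congrArg Subtype.val ((hT.subsingleton_path u v).elim q.toPath ⟨p, hp⟩)
  exact hq (q.edges_toPath_subset_edges (hqp ▸ hf))

lemma IsAcyclic.isTree_of_card [Finite V] (hG : G.IsAcyclic)
    (hcard : Nat.card G.edgeSet + 1 = Nat.card V) : G.IsTree := by
  have : Nonempty V := (Nat.card_pos_iff.1 (by omega)).1
  obtain ⟨F, hGF, -, hF⟩ := connected_top.exists_isTree_le_of_le_of_isAcyclic le_top hG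
  have hFcard := (isTree_iff_connected_and_card.1 hF).2
  have hEq : G.edgeSet = F.edgeSet := by
    refine Set.eq_of_subset_of_ncard_le (edgeSet_mono hGF) ?_
    simp only [Nat.card_coe_set_eq] at hcard hFcard
    omega
  rwa [edgeSet_inj.1 hEq]

lemma edgeSet_deleteEdges_sup_edge (f : Sym2 V) (huv : u ≠ v) :
    (T.deleteEdges {f} ⊔ edge u v).edgeSet = insert s(u, v) (T.edgeSet \ {f}) := by
  rw [edgeSet_sup, edgeSet_deleteEdges, edgeSet_edge_of_ne huv, Set.union_singleton]

lemma IsTree.deleteEdges_sup_edge [Finite V] (hT : T.IsTree) {p : T.Walk u v} (hp : p.IsPath)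
    {f : Sym2 V} (hf : f ∈ p.edges) (huv : ¬ T.Adj u v) (hne : u ≠ v) :
    (T.deleteEdges {f} ⊔ edge u v).IsTree := by
  refine IsAcyclic.isTree_of_card ?_ ?_
  · refine isAcyclic_sup_fromEdgeSet_iff.2 ⟨hT.isAcyclic.anti (deleteEdges_le _), fun h => ?_⟩
    exact (hT.isAcyclic.not_reachable_deleteEdges_of_mem_edges hp hf h).elim
  · have hnew : s(u, v) ∉ T.edgeSet \ {f} := fun h => huv h.1
    rw [← (isTree_iff_connected_and_card.1 hT).2, Nat.card_coe_set_eq, Nat.card_coe_set_eq,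
      edgeSet_deleteEdges_sup_edge f hne, Set.ncard_insert_of_notMem hnew,
      Set.ncard_sdiff_singleton_add_one (p.edges_subset_edgeSet hf)]

lemma IsAcyclic.mem_edges_or_eq_of_mem_support {M H : SimpleGraph V} (hM : M.IsAcyclic)
    {p : M.Walk u v} (hp : p.IsPath)
    (hmin : ∀ a b, H.Adj a b → ¬ M.Adj a b →
      ∀ q : M.Walk a b, q.IsPath → p.length ≤ q.length)
    {e : Sym2 V} (he : e ∈ H.edgeSet) (hsupp : ∀ x ∈ e, x ∈ p.support) :
    e ∈ p.edges ∨ e = s(u, v) := by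
  induction e using Sym2.ind with | _ x y => ?_
  obtain ⟨a, b, r, hr, hab⟩ :=
    p.exists_isSubwalk_of_mem_support (hsupp x (by simp)) (hsupp y (by simp))
  rw [← hab] at he ⊢
  have hr_path := isPath_of_isSubwalk hr hp
  by_cases hMab : M.Adj a b
  · exact Or.inl (hr.edges_subset (hM.mk_mem_edges_of_isPath hMab hr_path))
  · have hlen := hmin a b he hMab r hr_path
    obtain ⟨rfl, rfl⟩ := hr.eq_of_length_eq (le_antisymm (length_le_of_isSubwalk hr) hlen)
    exact Or.inr rfl

end SimpleGraph

section Weights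

variable {V : Type*} {G T : SimpleGraph V} {u v : V}

lemma wsum_deleteEdges_sup_edge [Finite V] (w : Sym2 V → ℝ) {f : Sym2 V} (hf : f ∈ T.edgeSet)
    (huv : ¬ T.Adj u v) (hne : u ≠ v) :
    wsum w (T.deleteEdges {f} ⊔ edge u v) = wsum w T - w f + w s(u, v) := by
  classical
  have hfin : (T.deleteEdges {f} ⊔ edge u v).edgeSet.toFinite.toFinset =
      insert s(u, v) (T.edgeSet.toFinite.toFinset.erase f) := by
    ext e
    simp only [edgeSet_deleteEdges_sup_edge f hne, Set.Finite.mem_toFinset, Set.mem_insert_iff,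
      Set.mem_sdiff, Set.mem_singleton_iff, Finset.mem_insert, Finset.mem_erase]
    tauto
  have hnew : s(u, v) ∉ T.edgeSet.toFinite.toFinset.erase f := by simpa using fun _ => huv
  rw [wsum, wsum, hfin, Finset.sum_insert hnew,
    Finset.sum_erase_eq_sub (by simpa using hf)]
  ring

theorem IsMST.weight_le_of_mem_edges [Finite V] {w : Sym2 V → ℝ} {M : SimpleGraph V}
    (hM : IsMST G w M) (huv : G.Adj u v) (hnuv : ¬ M.Adj u v) {p : M.Walk u v}
    (hp : p.IsPath) {f : Sym2 V} (hf : f ∈ p.edges) : w f ≤ w s(u, v) := by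
  have hle : M.deleteEdges {f} ⊔ edge u v ≤ G :=
    sup_le ((deleteEdges_le _).trans hM.1) ((edge_le_iff G).2 (Or.inr huv))
  have hmin := hM.2.2 _ hle (hM.2.1.deleteEdges_sup_edge hp hf hnuv huv.ne)
  rw [wsum_deleteEdges_sup_edge w (p.edges_subset_edgeSet hf) hnuv huv.ne] at hmin
  linarith

lemma sum_map_le_wdiam [Finite V] (w : Sym2 V → ℝ) {p : T.Walk u v} (hp : p.IsPath) :
    (p.edges.map w).sum ≤ wdiam w T := by
  classical
  -- `wdiam` is an `sSup`, so the path weights need an upper bound: the total positive weight.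
  refine le_csSup ⟨∑ e ∈ T.edgeSet.toFinite.toFinset, max (w e) 0, ?_⟩
    ⟨u, v, p, hp, rfl⟩
  rintro _ ⟨c, d, q, hq, rfl⟩
  calc (q.edges.map w).sum ≤ (q.edges.map fun e => max (w e) 0).sum :=
        List.sum_le_sum fun e _ => le_max_left _ _
    _ = ∑ e ∈ q.edges.toFinset, max (w e) 0 := (List.sum_toFinset _ hq.isTrail.edges_nodup).symm
    _ ≤ ∑ e ∈ T.edgeSet.toFinite.toFinset, max (w e) 0 :=
        Finset.sum_le_sum_of_subset_of_nonneg
          (fun e he => by simpa using q.edges_subset_edgeSet (List.mem_toFinset.1 he))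
          fun _ _ _ => le_max_right _ _

end Weights

theorem stmt5_general {V : Type*} [Finite V] (G : SimpleGraph V) (w : Sym2 V → ℝ)
    (hw1 : ∀ e ∈ G.edgeSet, w e ≤ 1)
    (M H : SimpleGraph V) (hM : IsMST G w M)
    (hHG : H ≤ G) (hMH : M ≤ H)
    (hcyc : ¬ H.IsAcyclic) :
    ∃ (u v : V), H.Adj u v ∧ ¬ M.Adj u v ∧
      ∃ p : M.Walk u v, p.IsPath ∧
        (∀ (u' v' : V), H.Adj u' v' → ¬ M.Adj u' v' →
          ∀ q : M.Walk u' v', q.IsPath → p.length ≤ q.length) ∧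
        (∀ e : Sym2 V, (e ∈ H.edgeSet ∧ ∀ x ∈ e, x ∈ p.support) ↔
          (e ∈ p.edges ∨ e = s(u, v))) ∧
        (∀ f ∈ p.edges, w f ≤ w s(u, v)) ∧
        w s(u, v) + (p.edges.map w).sum ≤ 1 + wdiam w M := by
  classical
  obtain ⟨x, y, hxy, hnxy⟩ : ∃ x y, H.Adj x y ∧ ¬ M.Adj x y := by
    by_contra! h
    exact hcyc (hM.2.1.isAcyclic.anti fun a b => h a b)
  have hex : ∃ n, ∃ u v, H.Adj u v ∧ ¬ M.Adj u v ∧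
      ∃ p : M.Walk u v, p.IsPath ∧ p.length = n :=
    let q := (hM.2.1.connected.preconnected x y).some.toPath
    ⟨_, x, y, hxy, hnxy, q, q.2, rfl⟩
  obtain ⟨u, v, huv, hnuv, p, hp, hlen⟩ := Nat.find_spec hex
  have hmin : ∀ u' v', H.Adj u' v' → ¬ M.Adj u' v' →
      ∀ q : M.Walk u' v', q.IsPath → p.length ≤ q.length := fun u' v' h hn q hq =>
    hlen ▸ Nat.find_min' hex ⟨u', v', h, hn, q, hq, rfl⟩
  refine ⟨u, v, huv, hnuv, p, hp, hmin, fun e => ⟨?_, ?_⟩,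
    fun f hf => hM.weight_le_of_mem_edges (hHG huv) hnuv hp hf, ?_⟩
  · rintro ⟨he, hsupp⟩
    exact hM.2.1.isAcyclic.mem_edges_or_eq_of_mem_support hp hmin he hsupp
  · rintro (he | rfl)
    · exact ⟨edgeSet_mono hMH (p.edges_subset_edgeSet he),
        fun z hz => p.mem_support_of_mem_edges he hz⟩
    · exact ⟨huv, by simp⟩
  · linarith [hw1 s(u, v) (hHG huv), sum_map_le_wdiam w hp]

/-- If `H ⊇ MST(G)` is a connected spanning subgraph of `G` containing a cycle, then there
are vertices `u, v` not adjacent in `MST(G)` but adjacent in `H`, with the `MST`-path `P`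
between them of minimal length, such that `H` induces on the vertices of `P` exactly the
cycle `P + uv`, the edge `uv` is the heaviest edge of this cycle, and the weight of this
cycle is at most `1 + wdiam(MST(G))`. -/
theorem stmt5 {V : Type*} [Finite V] (G : SimpleGraph V) (w : Sym2 V → ℝ)
    (hG : G.Connected) (hd : DistinctWeights G w)
    (hw1 : ∀ e ∈ G.edgeSet, w e ≤ 1)
    (M H : SimpleGraph V) (hM : IsMST G w M)
    (hHG : H ≤ G) (hHc : H.Connected) (hMH : M ≤ H)
    (hcyc : ¬ H.IsAcyclic) :
    ∃ (u v : V), H.Adj u v ∧ ¬ M.Adj u v ∧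
      ∃ p : M.Walk u v, p.IsPath ∧
        (∀ (u' v' : V), H.Adj u' v' → ¬ M.Adj u' v' →
          ∀ q : M.Walk u' v', q.IsPath → p.length ≤ q.length) ∧
        (∀ e : Sym2 V, (e ∈ H.edgeSet ∧ ∀ x ∈ e, x ∈ p.support) ↔
          (e ∈ p.edges ∨ e = s(u, v))) ∧
        (∀ f ∈ p.edges, w f ≤ w s(u, v)) ∧
        w s(u, v) + (p.edges.map w).sum ≤ 1 + wdiam w M :=
  stmt5_general G w hw1 M H hM hHG hMH hcyc
end

section
/- Let G be a weighted graph on vertex set V, let T be a subtree of G, and let G* have the same underlying graph with weights w* satisfying w*(e) ≤ w(e) for e ∈ E(T) and w*(e) = w(e) otherwise. Assume all weights of G and of G* are distinct. Then the edge set of MST(G*) is contained in E(MST(G)) ∪ E(T). -/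
/-!
Let `ab` be an edge of `MST(G*)` outside `T`, and suppose it is not in `MST(G)`. The path from
`a` to `b` in `MST(G)` crosses the cut that deleting `ab` leaves in `MST(G*)`, along an edge `d`.
The exchange argument in `MST(G*)` (swap `ab` for `d`) and in `MST(G)` (swap `d` for `ab`) give
`w ab = w* ab ≤ w* d ≤ w d ≤ w ab`, the middle step because weights only decrease. Hence
`w d = w ab`, so `d = ab` by distinctness of `w`, although `d ∈ MST(G)` and `ab ∉ MST(G)`.
-/

open SimpleGraph

namespace SimpleGraph

variable {V : Type*} {G : SimpleGraph V}

theorem Walk.exists_dart_not_reachable {H : SimpleGraph V} {a b : V} (p : G.Walk a b)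
    (hab : ¬ H.Reachable a b) : ∃ d ∈ p.darts, ¬ H.Reachable d.fst d.snd := by
  obtain ⟨d, hd, had, hbd⟩ :=
    p.exists_boundary_dart {v | H.Reachable a v} (Reachable.refl a) hab
  exact ⟨d, hd, fun h ↦ hbd (had.trans h)⟩

theorem Reachable.deleteEdges_or {z u : V} (h : G.Reachable z u) (v : V) :
    (G.deleteEdges {s(u, v)}).Reachable z u ∨ (G.deleteEdges {s(u, v)}).Reachable z v := by
  classical
  obtain ⟨P, hP⟩ := h.exists_isPath
  by_cases he : s(u, v) ∈ P.edges
  · have huv : u ≠ v := G.ne_of_adj (P.adj_of_mem_edges he)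
    have hv := P.snd_mem_support_of_mem_edges he
    have hu := Walk.endpoint_notMem_support_takeUntil hP hv huv
    exact .inr <| reachable_deleteEdges_iff_exists_walk.2
      ⟨P.takeUntil v hv, fun h ↦ hu ((P.takeUntil v hv).fst_mem_support_of_mem_edges h)⟩
  · exact .inl <| reachable_deleteEdges_iff_exists_walk.2 ⟨P, he⟩

theorem IsAcyclic.not_reachable_deleteEdges_of_mem_edges_s7 (hG : G.IsAcyclic) {a b x y : V}
    {p : G.Walk a b} (hp : p.IsPath) (he : s(x, y) ∈ p.edges) :
    ¬ (G.deleteEdges {s(x, y)}).Reachable a b := by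
  classical
  rw [reachable_deleteEdges_iff_exists_walk]
  rintro ⟨q, hq⟩
  have hpq : p = q.bypass :=
    congrArg Subtype.val <|
      (hG.subsingleton_path a b).elim ⟨p, hp⟩ ⟨q.bypass, q.bypass_isPath⟩
  exact hq (q.edges_bypass_subset_edges (hpq ▸ he))

theorem IsTree.deleteEdges_sup_edge_s7 (hG : G.IsTree) {u v x y : V}
    (hxy : ¬ (G.deleteEdges {s(u, v)}).Reachable x y) :
    (G.deleteEdges {s(u, v)} ⊔ edge x y).IsTree := by
  set D := G.deleteEdges {s(u, v)}
  have hDN : D ≤ D ⊔ edge x y := le_sup_left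
  have hside (z : V) : D.Reachable z u ∨ D.Reachable z v :=
    (hG.connected.preconnected z u).deleteEdges_or v
  have hx_ne_y : x ≠ y := fun h ↦ hxy (h ▸ Reachable.refl x)
  have hedge : (D ⊔ edge x y).Reachable x y :=
    Adj.reachable (Or.inr ((edge_adj ..).2 ⟨.inl ⟨rfl, rfl⟩, hx_ne_y⟩))
  -- `x` and `y` lie on opposite sides of the deleted edge, so the new edge reconnects `u` and `v`.
  have huv' : (D ⊔ edge x y).Reachable u v := by
    rcases hside x with hxu | hxv <;> rcases hside y with hyu | hyv
    · exact absurd (hxu.trans hyu.symm) hxy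
    · exact (hxu.mono hDN).symm.trans (hedge.trans (hyv.mono hDN))
    · exact (hyu.mono hDN).symm.trans (hedge.symm.trans (hxv.mono hDN))
    · exact absurd (hxv.trans hyv.symm) hxy
  have hreach_u (z : V) : (D ⊔ edge x y).Reachable z u :=
    (hside z).elim (·.mono hDN) fun h ↦ (h.mono hDN).trans huv'.symm
  have : Nonempty V := ⟨u⟩
  exact ⟨⟨fun z z' ↦ (hreach_u z).trans (hreach_u z').symm⟩,
    (hG.isAcyclic.anti (deleteEdges_le _)).sup_edge_of_not_reachable hxy⟩

end SimpleGraph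

section WeightSums

variable {V : Type*} [Finite V] (w : Sym2 V → ℝ)

theorem wsum_eq_sum {T : SimpleGraph V} {s : Finset (Sym2 V)}
    (hs : ∀ e, e ∈ s ↔ e ∈ T.edgeSet) :
    wsum w T = ∑ e ∈ s, w e := by
  unfold wsum
  congr 1
  ext e
  simp [hs]

theorem wsum_sup_edge {M : SimpleGraph V} {x y : V} (hxy : x ≠ y) (hM : ¬ M.Adj x y) :
    wsum w (M ⊔ edge x y) = wsum w M + w s(x, y) := by
  classical
  rw [wsum_eq_sum w (s := insert s(x, y) M.edgeSet.toFinite.toFinset), Finset.sum_insert,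
    add_comm, wsum]
  · simpa using hM
  · intro e
    simp [edgeSet_edge_of_ne hxy]

theorem wsum_deleteEdges_singleton {M : SimpleGraph V} {f : Sym2 V} (hf : f ∈ M.edgeSet) :
    wsum w (M.deleteEdges {f}) = wsum w M - w f := by
  classical
  rw [wsum_eq_sum w (s := M.edgeSet.toFinite.toFinset.erase f), Finset.sum_erase_eq_sub, wsum]
  · simpa using hf
  · intro e
    simp [and_comm]

end WeightSums

namespace IsMST

variable {V : Type*} [Finite V] {G : SimpleGraph V} {w : Sym2 V → ℝ} {M : SimpleGraph V}

theorem le_of_not_reachable_deleteEdges (hM : IsMST G w M) {u v x y : V} (huv : M.Adj u v)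
    (hxy : G.Adj x y) (hsep : ¬ (M.deleteEdges {s(u, v)}).Reachable x y) :
    w s(u, v) ≤ w s(x, y) := by
  by_cases heq : s(x, y) = s(u, v)
  · rw [heq]
  have hxyM : ¬ M.Adj x y := fun h ↦
    hsep (Adj.reachable ((deleteEdges_adj ..).2 ⟨h, by simpa using heq⟩))
  have hswap := hM.2.2 _ (sup_le ((deleteEdges_le _).trans hM.1) ((edge_le_iff _).2 (.inr hxy)))
    (hM.2.1.deleteEdges_sup_edge_s7 hsep)
  rw [wsum_sup_edge w hxy.ne (fun h ↦ hxyM ((deleteEdges_adj ..).1 h).1),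
    wsum_deleteEdges_singleton w huv] at hswap
  linarith

end IsMST

theorem stmt7_general {V : Type*} [Finite V] (G : SimpleGraph V) (w w' : Sym2 V → ℝ)
    (hd : DistinctWeights G w)
    (T : SimpleGraph V)
    (hle : ∀ e ∈ T.edgeSet, w' e ≤ w e)
    (heq : ∀ e ∉ T.edgeSet, w' e = w e)
    (M M' : SimpleGraph V) (hM : IsMST G w M) (hM' : IsMST G w' M') :
    M'.edgeSet ⊆ M.edgeSet ∪ T.edgeSet := by
  intro e he
  induction e using Sym2.ind with | _ a b => ?_
  by_contra hcon
  obtain ⟨heM, heT⟩ : s(a, b) ∉ M.edgeSet ∧ s(a, b) ∉ T.edgeSet := by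
    simpa [not_or] using hcon
  have hab : M'.Adj a b := he
  have hbridge : ¬ (M'.deleteEdges {s(a, b)}).Reachable a b :=
    isBridge_iff.1 (isAcyclic_iff_forall_isBridge.1 hM'.2.1.isAcyclic he)
  obtain ⟨p, hp⟩ := hM.2.1.connected.exists_isPath a b
  obtain ⟨d, hdp, hsep⟩ := p.exists_dart_not_reachable hbridge
  have hswap' : w' s(a, b) ≤ w' d.edge :=
    hM'.le_of_not_reachable_deleteEdges hab (hM.1 d.adj) hsep
  have hswap : w d.edge ≤ w s(a, b) :=
    hM.le_of_not_reachable_deleteEdges d.adj (hM'.1 hab)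
      (hM.2.1.isAcyclic.not_reachable_deleteEdges_of_mem_edges_s7 hp (List.mem_map_of_mem hdp))
  have hdecr : w' d.edge ≤ w d.edge := by
    by_cases hdT : d.edge ∈ T.edgeSet
    exacts [hle _ hdT, (heq _ hdT).le]
  have hdab : d.edge = s(a, b) := hd _ (hM.1 d.adj) _ (hM'.1 hab) (by linarith [heq _ heT])
  exact heM (hdab ▸ d.adj)

/-- If `G*` is obtained from `G` by reducing weights only on the edges of a subtree `T`
(all weights remaining distinct), then `E(MST(G*)) ⊆ E(MST(G)) ∪ E(T)`. -/
theorem stmt7 {V : Type*} [Finite V] (G : SimpleGraph V) (w w' : Sym2 V → ℝ)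
    (hG : G.Connected) (hd : DistinctWeights G w) (hd' : DistinctWeights G w')
    (T : SimpleGraph V) (hTG : T ≤ G) (hT : (T.induce T.support).IsTree)
    (hle : ∀ e ∈ T.edgeSet, w' e ≤ w e)
    (heq : ∀ e ∉ T.edgeSet, w' e = w e)
    (M M' : SimpleGraph V) (hM : IsMST G w M) (hM' : IsMST G w' M') :
    M'.edgeSet ⊆ M.edgeSet ∪ T.edgeSet :=
  stmt7_general G w w' hd T hle heq M M' hM hM'
end
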